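/- arXiv:2506.00810 — 3 statements merged into one kernel-verified Lean document; each statement's English description precedes it below -/
import Mathlib

section
/- Let (X,d) be a metric space and p₁,…,p_k ∈ X with D = X \ {p₁,…,p_k}. Then for all x, y ∈ D, the average scale-invariant Cassinian metric satisfies τ̂_D(x,y) ≤ u_D(x,y). -/
/-! Every Cassinian term `log (1 + 2 d(x,y) / √(d(x,pᵢ) d(y,pᵢ)))` is at most the one built from the
distances `d(x)`, `d(y)` to the whole puncture set, and `1 + 2t/s ≤ ((t + m)/s)²` whenever
`0 < s ≤ m`; taking `s = √(d(x) d(y)) ≤ max {d(x), d(y)} = m` bounds each term, hence their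
average, by `u_D(x,y)`. -/

open Real

theorem Real.sqrt_mul_le_max {a b : ℝ} (ha : 0 ≤ a) : √(a * b) ≤ max a b :=
  Real.sqrt_le_iff.mpr ⟨ha.trans (le_max_left a b),
    by nlinarith [le_max_left a b, le_max_right a b]⟩

theorem Real.log_one_add_two_mul_div_le {t s m : ℝ} (ht : 0 ≤ t) (hs : 0 < s) (hsm : s ≤ m) :
    log (1 + 2 * t / s) ≤ 2 * log ((t + m) / s) := by
  have hsq : 1 + 2 * t / s ≤ ((t + m) / s) ^ 2 := by
    rw [div_pow, le_div_iff₀ (by positivity)]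
    field_simp
    nlinarith
  calc log (1 + 2 * t / s) ≤ log (((t + m) / s) ^ 2) := log_le_log (by positivity) hsq
    _ = 2 * log ((t + m) / s) := by rw [log_pow]; norm_num

theorem ciInf_dist_pos {X ι : Type*} [MetricSpace X] [Finite ι] [Nonempty ι] {x : X}
    {p : ι → X} (hx : ∀ i, x ≠ p i) : 0 < ⨅ i, dist x (p i) := by
  obtain ⟨j, hj⟩ := exists_eq_ciInf_of_finite (f := fun i => dist x (p i))
  exact hj ▸ dist_pos.2 (hx j)

/-- The average scale-invariant Cassinian metric satisfies τ̂_D ≤ u_D. -/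
theorem avg_tau_le_u {X : Type*} [MetricSpace X] (k : ℕ) (hk : 0 < k) (p : Fin k → X)
    (x y : X) (hx : ∀ i, x ≠ p i) (hy : ∀ i, y ≠ p i) :
    (1 / (k : ℝ)) * ∑ i : Fin k,
        Real.log (1 + 2 * dist x y / Real.sqrt (dist x (p i) * dist y (p i))) ≤
      2 * Real.log ((dist x y + max (⨅ i, dist x (p i)) (⨅ i, dist y (p i))) /
        Real.sqrt ((⨅ i, dist x (p i)) * (⨅ i, dist y (p i)))) := by
  have : Nonempty (Fin k) := ⟨⟨0, hk⟩⟩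
  set dx := ⨅ i, dist x (p i)
  set dy := ⨅ i, dist y (p i)
  have hdx : 0 < dx := ciInf_dist_pos hx
  have hdy : 0 < dy := ciInf_dist_pos hy
  have hterm : ∀ i ∈ Finset.univ,
      log (1 + 2 * dist x y / √(dist x (p i) * dist y (p i))) ≤
        2 * log ((dist x y + max dx dy) / √(dx * dy)) := fun i _ => calc
    _ ≤ log (1 + 2 * dist x y / √(dx * dy)) := by
      gcongr
      · exact ciInf_le (Finite.bddBelow_range _) i
      · exact ciInf_le (Finite.bddBelow_range _) i
    _ ≤ _ := log_one_add_two_mul_div_le dist_nonneg (by positivity)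
      (sqrt_mul_le_max hdx.le)
  have hsum := Finset.sum_le_card_nsmul _ _ _ hterm
  rw [Finset.card_univ, Fintype.card_fin, nsmul_eq_mul] at hsum
  rw [one_div_mul_eq_div, div_le_iff₀' (by exact_mod_cast hk)]
  exact hsum
end

section
/- Let (X,d) be a metric space, p ∈ X, and x, y ∈ X \ {p}. Then (1/2)·j*_p(x,y) ≤ tanh(τ_p(x,y)/2) ≤ 2·j*_p(x,y), where j*_p(x,y) = tanh(j̃_p(x,y)/2). -/
/-!
Since `tanh (log (1 + s) / 2) = s / (s + 2)`, writing `t = d(x,y)`, `m = min {d(x,p), d(y,p)}` and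
`g = √(d(x,p) d(y,p))` gives `j*_p(x,y) = t / (t + 2m)` and `tanh (τ_p(x,y) / 2) = t / (t + g)`.
Both bounds then follow from `m ≤ g ≤ max {d(x,p), d(y,p)} ≤ m + t`, the last step being the
triangle inequality `|d(x,p) - d(y,p)| ≤ d(x,y)`.
-/

open Real

theorem Real.tanh_eq_exp_two_mul (x : ℝ) : tanh x = (exp (2 * x) - 1) / (exp (2 * x) + 1) := by
  have h : exp (2 * x) = exp x * exp x := by rw [two_mul, exp_add]
  rw [tanh_eq, exp_neg, h]
  field_simp

theorem Real.tanh_half_log {u : ℝ} (hu : 0 < u) : tanh (log u / 2) = (u - 1) / (u + 1) := by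
  rw [tanh_eq_exp_two_mul, mul_div_cancel₀ _ two_ne_zero, exp_log hu]

theorem Real.tanh_half_log_one_add_div {t m : ℝ} (hm : 0 < m) (htm : 0 < t + m) :
    tanh (log (1 + t / m) / 2) = t / (t + 2 * m) := by
  have h1 : 1 + t / m = (t + m) / m := by field_simp; ring
  have h2m : t + 2 * m ≠ 0 := by linarith
  rw [h1, tanh_half_log (div_pos htm hm), div_eq_div_iff (by positivity) h2m]
  field_simp
  ring

theorem Real.min_le_sqrt_mul {a b : ℝ} (ha : 0 ≤ a) (hb : 0 ≤ b) : min a b ≤ √(a * b) :=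
  (le_sqrt (le_min ha hb) (mul_nonneg ha hb)).2 <| by
    rw [sq]; exact mul_le_mul (min_le_left a b) (min_le_right a b) (le_min ha hb) ha

theorem Real.sqrt_mul_le_min_add_abs_sub {a b : ℝ} (ha : 0 ≤ a) (hb : 0 ≤ b) :
    √(a * b) ≤ min a b + |a - b| :=
  calc √(a * b) ≤ max a b := (sqrt_le_left (le_max_of_le_left ha)).2 <| by
        rw [sq]; exact mul_le_mul (le_max_left a b) (le_max_right a b) hb (le_max_of_le_left ha)
    _ = min a b + |a - b| := by rw [← max_sub_min_eq_abs' a b]; ring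

theorem half_div_le_div_le_two_mul_div {t m g : ℝ} (ht : 0 ≤ t) (hm : 0 < m) (hmg : m ≤ g)
    (hg : g ≤ t + 4 * m) :
    1 / 2 * (t / (t + 2 * m)) ≤ t / (t + g) ∧ t / (t + g) ≤ 2 * (t / (t + 2 * m)) := by
  have hg0 : 0 < t + g := by linarith
  constructor
  · rw [one_div_mul_eq_div, div_div, div_le_div_iff₀ (by positivity) hg0]
    exact mul_le_mul_of_nonneg_left (by linarith) ht
  · rw [← mul_div_assoc, div_le_div_iff₀ hg0 (by positivity)]
    nlinarith

/-- (1/2) j*_p ≤ tanh(τ_p/2) ≤ 2 j*_p where j*_p = tanh(j̃_p/2). -/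
theorem tau_jstar_comparison {X : Type*} [MetricSpace X] (p x y : X)
    (hx : x ≠ p) (hy : y ≠ p) :
    (1 / 2) * Real.tanh (Real.log (1 + dist x y / min (dist x p) (dist y p)) / 2) ≤
        Real.tanh (Real.log (1 + 2 * dist x y / Real.sqrt (dist x p * dist y p)) / 2) ∧
      Real.tanh (Real.log (1 + 2 * dist x y / Real.sqrt (dist x p * dist y p)) / 2) ≤
        2 * Real.tanh (Real.log (1 + dist x y / min (dist x p) (dist y p)) / 2) := by
  have ha : 0 < dist x p := dist_pos.2 hx
  have hb : 0 < dist y p := dist_pos.2 hy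
  have hm : 0 < min (dist x p) (dist y p) := lt_min ha hb
  have hg : 0 < √(dist x p * dist y p) := sqrt_pos.2 (mul_pos ha hb)
  rw [tanh_half_log_one_add_div hm (by positivity), tanh_half_log_one_add_div hg (by positivity),
    ← mul_add, mul_div_mul_left _ _ two_ne_zero]
  refine half_div_le_div_le_two_mul_div dist_nonneg hm (min_le_sqrt_mul ha.le hb.le) ?_
  linarith [sqrt_mul_le_min_add_abs_sub ha.le hb.le, abs_dist_sub_le x y p]
end

section
/- In the punctured Euclidean space ℝⁿ \ {0}, with x = e₁ and y = t·e₁ for 0 < t < 1, the ratio j̃_0(x,y)/τ_0(x,y) = (√t + 2(1−t))/(1+t) tends to 1/2 as t → 1⁻ and to 2 as t → 0⁺; hence both constants in (1/2)·j̃_p ≤ τ_p ≤ 2·j̃_p are sharp. -/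
/-!
For a unit vector `e` and `0 < t < 1`, `j̃₀(e, t e) = -log t` and
`τ₀(e, t e) = log (1 + 2 (1 - t) / √t)`. As `t → 1`, `-log t ~ 1 - t` and `log (1 + u) ~ u`,
so the ratio behaves like `(1 - t) / (2 (1 - t) / √t) = √t / 2 → 1 / 2`. As `t → 0`,
`τ₀ = log (√t + 2 (1 - t)) - (log t) / 2` with bounded first term, so `τ₀ / j̃₀ → 1 / 2`.
-/

open Real Filter Topology Asymptotics Set

noncomputable section

variable {E : Type*} [SeminormedAddCommGroup E] [NormedSpace ℝ E]

/-- The point-pair function `j̃₀` of the punctured space `E \ {0}`. -/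
def jtildeZero (x y : E) : ℝ := log (1 + dist x y / min (dist x 0) (dist y 0))

/-- The point-pair function `τ₀` of the punctured space `E \ {0}`. -/
def tauZero (x y : E) : ℝ := log (1 + 2 * dist x y / √(dist x 0 * dist y 0))

section UnitVector

variable {x : E} (hx : ‖x‖ = 1) {t : ℝ}
include hx

lemma dist_smul_zero_of_norm_eq_one (ht : 0 ≤ t) : dist (t • x) 0 = t := by
  rw [dist_zero_right, norm_smul, hx, mul_one, norm_of_nonneg ht]

lemma dist_self_smul_of_norm_eq_one (ht : t ≤ 1) : dist x (t • x) = 1 - t := by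
  rw [dist_eq_norm, show x - t • x = (1 - t) • x by module, norm_smul, hx, mul_one,
    norm_of_nonneg (sub_nonneg.2 ht)]

lemma jtildeZero_smul_self (ht₀ : 0 < t) (ht₁ : t ≤ 1) : jtildeZero x (t • x) = -log t := by
  have hdist : dist x 0 = 1 := by rw [dist_zero_right, hx]
  rw [jtildeZero, dist_self_smul_of_norm_eq_one hx ht₁, dist_smul_zero_of_norm_eq_one hx ht₀.le,
    hdist, min_eq_right ht₁, ← log_inv]
  congr 1
  field_simp
  ring

lemma tauZero_smul_self (ht₀ : 0 ≤ t) (ht₁ : t ≤ 1) :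
    tauZero x (t • x) = log (1 + 2 * (1 - t) / √t) := by
  have hdist : dist x 0 = 1 := by rw [dist_zero_right, hx]
  rw [tauZero, dist_self_smul_of_norm_eq_one hx ht₁, dist_smul_zero_of_norm_eq_one hx ht₀, hdist,
    one_mul]

end UnitVector

lemma isEquivalent_log_sub_one : log ~[𝓝 1] fun u => u - 1 := by
  refine (hasDerivAt_iff_isLittleO.1 (hasDerivAt_log one_ne_zero)).congr_left fun u => ?_
  simp

lemma tendsto_neg_log_div_log_nhdsLT_one :
    Tendsto (fun t => -log t / log (1 + 2 * (1 - t) / √t)) (𝓝[<] 1) (𝓝 (1 / 2)) := by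
  set b : ℝ → ℝ := fun t => 2 * (1 - t) / √t
  have hb : Tendsto (fun t => 1 + b t) (𝓝[<] 1) (𝓝 1) := by
    have : ContinuousAt (fun t => 1 + b t) 1 := by
      unfold b
      fun_prop (disch := norm_num)
    simpa [b] using this.tendsto.mono_left nhdsWithin_le_nhds
  have hnum : (fun t => -log t) ~[𝓝[<] 1] fun t => 1 - t := by
    simpa using (isEquivalent_log_sub_one.mono nhdsWithin_le_nhds).neg
  have hden : (fun t => log (1 + b t)) ~[𝓝[<] 1] b := by
    simpa [Function.comp_def] using isEquivalent_log_sub_one.comp_tendsto hb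
  -- `(1 - t) / b t = √t / 2`, which tends to `1 / 2`
  have hsqrt : Tendsto (fun t => √t / 2) (𝓝[<] 1) (𝓝 (1 / 2)) := by
    have : ContinuousAt (fun t => √t / 2) 1 := by fun_prop
    simpa using this.tendsto.mono_left nhdsWithin_le_nhds
  refine ((hnum.div hden).symm.tendsto_nhds (hsqrt.congr' ?_))
  filter_upwards [Ioo_mem_nhdsLT one_pos] with t ht
  have : 0 < 1 - t := sub_pos.2 ht.2
  have : 0 < √t := sqrt_pos.2 ht.1
  simp only [Pi.div_apply, b]
  field_simp

lemma log_one_add_two_mul_one_sub_div_sqrt {t : ℝ} (ht₀ : 0 < t) (ht₁ : t ≤ 1) :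
    log (1 + 2 * (1 - t) / √t) = log (√t + 2 * (1 - t)) - log t / 2 := by
  have hsqrt : 0 < √t := sqrt_pos.2 ht₀
  have hsum : 0 < √t + 2 * (1 - t) := by linarith
  rw [← log_sqrt ht₀.le, ← log_div hsum.ne' hsqrt.ne']
  congr 1
  field_simp

lemma tendsto_log_div_neg_log_nhdsGT_zero :
    Tendsto (fun t => log (1 + 2 * (1 - t) / √t) / -log t) (𝓝[>] 0) (𝓝 (1 / 2)) := by
  have hneglog : Tendsto (fun t => -log t) (𝓝[>] 0) atTop :=
    tendsto_neg_atBot_atTop.comp tendsto_log_nhdsGT_zero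
  have hbounded : Tendsto (fun t => log (√t + 2 * (1 - t))) (𝓝[>] 0) (𝓝 (log 2)) := by
    have : ContinuousAt (fun t => log (√t + 2 * (1 - t))) 0 := by
      fun_prop (disch := norm_num)
    simpa using this.tendsto.mono_left nhdsWithin_le_nhds
  have hsum := (hbounded.div_atTop hneglog).add_const (1 / 2 : ℝ)
  rw [zero_add] at hsum
  refine hsum.congr' ?_
  filter_upwards [Ioo_mem_nhdsGT one_pos] with t ht
  have hlog : log t ≠ 0 := (log_neg ht.1 ht.2).ne
  rw [log_one_add_two_mul_one_sub_div_sqrt ht.1 ht.2.le]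
  field_simp
  ring

lemma tendsto_neg_log_div_log_nhdsGT_zero :
    Tendsto (fun t => -log t / log (1 + 2 * (1 - t) / √t)) (𝓝[>] 0) (𝓝 2) := by
  simpa using tendsto_log_div_neg_log_nhdsGT_zero.inv₀ (by norm_num)

end

/-- Sharpness of the comparison between j̃ and τ: in ℝⁿ \ {0} with x = e₁,
y = t e₁, the ratio j̃₀/τ₀ tends to 1/2 as t → 1⁻ and to 2 as t → 0⁺. -/
theorem jtilde_tau_ratio_sharp (n : ℕ) (hn : 0 < n)
    (x : EuclideanSpace ℝ (Fin n)) (hx : x = EuclideanSpace.single ⟨0, hn⟩ 1) :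
    Filter.Tendsto (fun t : ℝ =>
        Real.log (1 + dist x (t • x) / min (dist x 0) (dist (t • x) 0)) /
          Real.log (1 + 2 * dist x (t • x) / Real.sqrt (dist x 0 * dist (t • x) 0)))
      (nhdsWithin 1 (Set.Ioo 0 1)) (nhds (1 / 2)) ∧
    Filter.Tendsto (fun t : ℝ =>
        Real.log (1 + dist x (t • x) / min (dist x 0) (dist (t • x) 0)) /
          Real.log (1 + 2 * dist x (t • x) / Real.sqrt (dist x 0 * dist (t • x) 0)))
      (nhdsWithin 0 (Set.Ioo 0 1)) (nhds 2) := by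
  have hx₁ : ‖x‖ = 1 := by rw [hx, PiLp.norm_single, norm_one]
  have hratio : ∀ t ∈ Ioo (0 : ℝ) 1,
      -log t / log (1 + 2 * (1 - t) / √t) = jtildeZero x (t • x) / tauZero x (t • x) :=
    fun t ht => by
      rw [jtildeZero_smul_self hx₁ ht.1 ht.2.le, tauZero_smul_self hx₁ ht.1.le ht.2.le]
  change Tendsto (fun t => jtildeZero x (t • x) / tauZero x (t • x)) _ _ ∧
    Tendsto (fun t => jtildeZero x (t • x) / tauZero x (t • x)) _ _
  rw [nhdsWithin_Ioo_eq_nhdsLT one_pos, nhdsWithin_Ioo_eq_nhdsGT one_pos]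
  exact ⟨tendsto_neg_log_div_log_nhdsLT_one.congr' (eventually_of_mem (Ioo_mem_nhdsLT one_pos) hratio),
    tendsto_neg_log_div_log_nhdsGT_zero.congr' (eventually_of_mem (Ioo_mem_nhdsGT one_pos) hratio)⟩
end
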